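/- Let f(x,y,a) = y + 4x/a - (2a/(a²+16))·(x - 4y/a)² + a(a²+16)/8. There exist a̅ > 0 and r > 0 such that for all (x,y) with ‖(x,y)‖ < r, x < (1/2)y², and (x,y) ≠ (0,0), and all a ∈ (-a̅, 0): ∂f/∂a(x,y,a) lies in the interval ((2y²-4x)/a² + 1, (2y²-4x)/a² + 3); in particular ∂f/∂a(x,y,a) > 1 whenever 2y² - 4x > 0. -/

import Mathlib

/-- The defining function `f` of the level parabolas. -/
noncomputable def fullerf (x y a : ℝ) : ℝ :=
  y + 4 * x / a - (2 * a / (a ^ 2 + 16)) * (x - 4 * y / a) ^ 2 + a * (a ^ 2 + 16) / 8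

/-- Quantitative bound on `∂f/∂a` near `(0,0,0⁻)`. -/
theorem fullerf_deriv_a_bound :
    ∃ abar > (0:ℝ), ∃ r > (0:ℝ), ∀ x y a : ℝ,
      Real.sqrt (x ^ 2 + y ^ 2) < r → x < (1 / 2) * y ^ 2 → (x, y) ≠ ((0:ℝ), (0:ℝ)) →
      a ∈ Set.Ioo (-abar) 0 →
        deriv (fun b => fullerf x y b) a ∈
            Set.Ioo ((2 * y ^ 2 - 4 * x) / a ^ 2 + 1) ((2 * y ^ 2 - 4 * x) / a ^ 2 + 3) ∧
          (0 < 2 * y ^ 2 - 4 * x → 1 < deriv (fun b => fullerf x y b) a) := by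
  refine ⟨1/2, by norm_num, 1/2, by norm_num, ?_⟩
  intro x y a hr _hx _hxy ha
  obtain ⟨ha1, ha2⟩ := ha
  have ha0 : a ≠ 0 := ne_of_lt ha2
  have hq : (0:ℝ) < a ^ 2 + 16 := by positivity
  have hqne : a ^ 2 + 16 ≠ 0 := ne_of_gt hq
  have hs : x ^ 2 + y ^ 2 < 1/4 := by
    nlinarith [Real.sq_sqrt (show (0:ℝ) ≤ x ^ 2 + y ^ 2 by positivity),
      Real.sqrt_nonneg (x ^ 2 + y ^ 2)]
  have ha4 : a ^ 2 < 1/4 := by nlinarith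
  set E : ℝ := (-32*(2*x^2+a*x*y-2*y^2) + 2*(x^2-y^2)*(a^2+16)
      + 3*a^2/8*(a^2+16)^2)/(a^2+16)^2 with hE
  have hD : deriv (fun b => fullerf x y b) a = (2*y^2-4*x)/a^2 + 2 + E := by
    have hid := hasDerivAt_id a
    have hden : HasDerivAt (fun b : ℝ => b ^ 2 + 16) (2 * a) a := by
      simpa using (hid.pow 2).add_const 16
    have ht1 : HasDerivAt (fun b : ℝ => 4 * x / b) ((0 * a - 4 * x * 1) / a ^ 2) a :=
      (hasDerivAt_const a (4*x)).div hid ha0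
    have ht2 : HasDerivAt (fun b : ℝ => 2 * b / (b ^ 2 + 16))
        ((1 * 2 * (a ^ 2 + 16) - 2 * a * (2 * a)) / (a ^ 2 + 16) ^ 2) a := by
      simpa [mul_comm] using (hid.const_mul 2).fun_div hden hqne
    have ht3 : HasDerivAt (fun b : ℝ => x - 4 * y / b)
        (0 - (0 * a - 4 * y * 1) / a ^ 2) a :=
      (hasDerivAt_const a x).sub ((hasDerivAt_const a (4*y)).div hid ha0)
    have ht4 := ht3.pow 2
    have ht5 := ht2.mul ht4
    have ht6 : HasDerivAt (fun b : ℝ => b * (b ^ 2 + 16) / 8)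
        ((1 * (a ^ 2 + 16) + a * (2 * a)) / 8) a := (hid.mul hden).div_const 8
    have hcomb := (((hasDerivAt_const a y).add ht1).sub ht5).add ht6
    have hfull : HasDerivAt (fun b => fullerf x y b) ((2*y^2-4*x)/a^2 + 2 + E) a := by
      refine hcomb.congr_deriv ?_
      rw [hE]; simp only [Pi.pow_apply]; push_cast; field_simp; ring
    exact hfull.deriv
  have hpos2 : (0:ℝ) < (a ^ 2 + 16) ^ 2 := by positivity
  have hE1 : E < 1 := by
    rw [hE, div_lt_one hpos2]
    nlinarith [sq_nonneg (x + y), sq_nonneg (x - y), sq_nonneg (a*x - y), sq_nonneg (a*x + y),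
      sq_nonneg x, sq_nonneg y, sq_nonneg a, sq_nonneg (a^2)]
  have hE2 : -1 < E := by
    rw [hE, lt_div_iff₀ hpos2]
    nlinarith [sq_nonneg (x + y), sq_nonneg (x - y), sq_nonneg (a*x - y), sq_nonneg (a*x + y),
      sq_nonneg x, sq_nonneg y, sq_nonneg a, sq_nonneg (a^2)]
  refine ⟨⟨by rw [hD]; linarith, by rw [hD]; linarith⟩, ?_⟩
  intro hpos
  have h : 0 < (2 * y ^ 2 - 4 * x) / a ^ 2 := div_pos hpos (by positivity)
  rw [hD]; linarith
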